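/- Let (M,h) be a Riemannian surface and h^{t,s} a 2-parameter family of metrics with h^{0,0} = h. Define Ḣ^t, Ḣ^s ∈ End(TM) by ∂_t h^{t,s}|_{0,0} = h(Ḣ^t·,·) and ∂_s h^{t,s}|_{0,0} = h(Ḣ^s·,·). Then the curvature R of the natural connection on the vertical tangent bundle over ℝ²×M satisfies R_{∂_s,∂_t} X = −(1/4)[Ḣ^s, Ḣ^t]X for every tangent vector X to M. -/

import Mathlib

open Matrix

/-!
The fibration `ℝ² × M → ℝ²` with fiber metric `h^{t,s}` and the product horizontal
distribution, in a fixed coordinate frame on the (2-dimensional) fiber at a point of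
`M`: the metric is a 2-parameter family of matrices `G t s` (with `G 0 0 = h`), a
(vertical) section is a map `X : ℝ → ℝ → (Fin 2 → ℝ)`, and the connection on the
vertical tangent bundle induced by the Levi-Civita connection of `dt² + ds² + h^{t,s}`
acts in the horizontal directions by the covariant derivatives
`∇_{∂t} X = ∂_t X + (1/2) G⁻¹ (∂_t G) X` and `∇_{∂s} X = ∂_s X + (1/2) G⁻¹ (∂_s G) X`
(this is exactly `⟨∇_{∂t} X, Y⟩ = (1/2) (∂_t h)(X,Y)` for constant `X, Y`, as in the
text).  With `Ḣ^t = h⁻¹ ∂_t G|₀` and `Ḣ^s = h⁻¹ ∂_s G|₀` (i.e.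
`∂_t h|₀ = h(Ḣ^t ·, ·)`), the curvature satisfies
`R_{∂_s,∂_t} X = (∇_{∂s}∇_{∂t} − ∇_{∂t}∇_{∂s}) X = −(1/4)[Ḣ^s, Ḣ^t] X`
for every tangent vector `X` to `M` (i.e. every constant section).
-/

/-- Covariant derivative in the `t`-direction of a section of the vertical bundle. -/
noncomputable def covDt (G : ℝ → ℝ → Matrix (Fin 2) (Fin 2) ℝ)
    (X : ℝ → ℝ → (Fin 2 → ℝ)) : ℝ → ℝ → (Fin 2 → ℝ) := fun t s =>
  (fun i => deriv (fun τ => X τ s i) t)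
    + (1 / 2 : ℝ) • (((G t s)⁻¹ * Matrix.of fun i j => deriv (fun τ => G τ s i j) t)
        *ᵥ X t s)

/-- Covariant derivative in the `s`-direction of a section of the vertical bundle. -/
noncomputable def covDs (G : ℝ → ℝ → Matrix (Fin 2) (Fin 2) ℝ)
    (X : ℝ → ℝ → (Fin 2 → ℝ)) : ℝ → ℝ → (Fin 2 → ℝ) := fun t s =>
  (fun i => deriv (fun σ => X t σ i) s)
    + (1 / 2 : ℝ) • (((G t s)⁻¹ * Matrix.of fun i j => deriv (fun σ => G t σ i j) s)
        *ᵥ X t s)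

attribute [local instance] Matrix.linftyOpNormedRing Matrix.linftyOpNormedAlgebra

noncomputable def clmNAG : NormedAddCommGroup (ℝ × ℝ →L[ℝ] Matrix (Fin 2) (Fin 2) ℝ) :=
  ContinuousLinearMap.toNormedAddCommGroup
attribute [local instance] clmNAG
noncomputable def clmNS : NormedSpace ℝ (ℝ × ℝ →L[ℝ] Matrix (Fin 2) (Fin 2) ℝ) :=
  ContinuousLinearMap.toNormedSpace
attribute [local instance] clmNS

namespace CurvAux

/-- entry evaluation as a continuous linear map -/
noncomputable def entryCLM (i j : Fin 2) : Matrix (Fin 2) (Fin 2) ℝ →L[ℝ] ℝ :=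
  LinearMap.toContinuousLinearMap
    { toFun := fun M => M i j
      map_add' := fun _ _ => rfl
      map_smul' := fun _ _ => rfl }

@[simp] lemma entryCLM_apply (i j : Fin 2) (M : Matrix (Fin 2) (Fin 2) ℝ) :
    entryCLM i j M = M i j := rfl

/-- `M ↦ (M *ᵥ v) i` as a continuous linear map -/
noncomputable def vecCLM (v : Fin 2 → ℝ) (i : Fin 2) : Matrix (Fin 2) (Fin 2) ℝ →L[ℝ] ℝ :=
  LinearMap.toContinuousLinearMap
    { toFun := fun M => (M *ᵥ v) i
      map_add' := fun M N => by simp [Matrix.add_mulVec]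
      map_smul' := fun c M => by simp [Matrix.smul_mulVec] }

@[simp] lemma vecCLM_apply (v : Fin 2 → ℝ) (i : Fin 2) (M : Matrix (Fin 2) (Fin 2) ℝ) :
    vecCLM v i M = (M *ᵥ v) i := rfl

lemma lineT {V : Type*} [NormedAddCommGroup V] [NormedSpace ℝ V]
    (H : ℝ × ℝ → V) (hH : Differentiable ℝ H) (t s : ℝ) :
    HasDerivAt (fun τ => H (τ, s)) (fderiv ℝ H (t, s) (1, 0)) t := by
  have h1 : HasDerivAt (fun τ : ℝ => (τ, s)) ((1 : ℝ), (0 : ℝ)) t :=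
    (hasDerivAt_id t).prodMk (hasDerivAt_const t s)
  exact (hH (t, s)).hasFDerivAt.comp_hasDerivAt t h1

lemma lineS {V : Type*} [NormedAddCommGroup V] [NormedSpace ℝ V]
    (H : ℝ × ℝ → V) (hH : Differentiable ℝ H) (t s : ℝ) :
    HasDerivAt (fun σ => H (t, σ)) (fderiv ℝ H (t, s) (0, 1)) s := by
  have h1 : HasDerivAt (fun σ : ℝ => (t, σ)) ((0 : ℝ), (1 : ℝ)) s :=
    (hasDerivAt_const s t).prodMk (hasDerivAt_id s)
  exact (hH (t, s)).hasFDerivAt.comp_hasDerivAt s h1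

noncomputable def pF (G : ℝ → ℝ → Matrix (Fin 2) (Fin 2) ℝ) : ℝ × ℝ → Matrix (Fin 2) (Fin 2) ℝ :=
  fun p => G p.1 p.2

noncomputable def pFt (G : ℝ → ℝ → Matrix (Fin 2) (Fin 2) ℝ) : ℝ × ℝ → Matrix (Fin 2) (Fin 2) ℝ :=
  fun p => fderiv ℝ (pF G) p (1, 0)

noncomputable def pFs (G : ℝ → ℝ → Matrix (Fin 2) (Fin 2) ℝ) : ℝ × ℝ → Matrix (Fin 2) (Fin 2) ℝ :=
  fun p => fderiv ℝ (pF G) p (0, 1)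

noncomputable def pA (G : ℝ → ℝ → Matrix (Fin 2) (Fin 2) ℝ) : ℝ × ℝ → Matrix (Fin 2) (Fin 2) ℝ :=
  fun p => (pF G p)⁻¹ * pFt G p

noncomputable def pB (G : ℝ → ℝ → Matrix (Fin 2) (Fin 2) ℝ) : ℝ × ℝ → Matrix (Fin 2) (Fin 2) ℝ :=
  fun p => (pF G p)⁻¹ * pFs G p

end CurvAux

open CurvAux

theorem stmt_14
    (G : ℝ → ℝ → Matrix (Fin 2) (Fin 2) ℝ)
    (hsmooth : ∀ i j, ContDiff ℝ (⊤ : ℕ∞) (fun p : ℝ × ℝ => G p.1 p.2 i j))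
    (hsym : ∀ t s, (G t s)ᵀ = G t s)
    (hposdef : ∀ t s, (G t s).PosDef) :
    ∀ v : Fin 2 → ℝ,
      covDs G (covDt G fun _ _ => v) 0 0 - covDt G (covDs G fun _ _ => v) 0 0
        = (-(1 / 4 : ℝ)) •
            ((((G 0 0)⁻¹ * Matrix.of fun i j => deriv (fun σ => G 0 σ i j) 0)
              * ((G 0 0)⁻¹ * Matrix.of fun i j => deriv (fun τ => G τ 0 i j) 0)
             - ((G 0 0)⁻¹ * Matrix.of fun i j => deriv (fun τ => G τ 0 i j) 0)
              * ((G 0 0)⁻¹ * Matrix.of fun i j => deriv (fun σ => G 0 σ i j) 0))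
            *ᵥ v) := by
  intro v
  have hu : ∀ p : ℝ × ℝ, IsUnit (pF G p) := fun p =>
    (Matrix.isUnit_iff_isUnit_det _).mpr
      (isUnit_iff_ne_zero.mpr (hposdef p.1 p.2).det_pos.ne')
  -- smoothness of the matrix-valued map
  have hF : ContDiff ℝ (⊤ : ℕ∞) (pF G) := by
    have hrw : pF G = fun p => ∑ i : Fin 2, ∑ j : Fin 2,
        G p.1 p.2 i j • Matrix.single i j (1 : ℝ) := by
      funext p
      rw [Matrix.matrix_eq_sum_single (pF G p)]
      simp [pF, Matrix.smul_single]
    rw [hrw]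
    exact ContDiff.sum fun i _ => ContDiff.sum fun j _ => (hsmooth i j).smul contDiff_const
  have hdF : Differentiable ℝ (pF G) := hF.differentiable (by simp)
  -- smoothness of the inverse
  have hInv : ContDiff ℝ (⊤ : ℕ∞) (fun p => (pF G p)⁻¹) := by
    simp only [Matrix.nonsing_inv_eq_ringInverse]
    rw [contDiff_iff_contDiffAt]
    intro p
    have h1 : ContDiffAt ℝ (⊤ : ℕ∞) Ring.inverse (pF G p) := by
      have := contDiffAt_ringInverse (𝕜 := ℝ) (n := (⊤ : ℕ∞)) (hu p).unit
      rwa [IsUnit.unit_spec] at this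
    exact h1.comp p hF.contDiffAt
  have hFtc : ContDiff ℝ (⊤ : ℕ∞) (pFt G) := (hF.fderiv_right (by simp)).clm_apply contDiff_const
  have hFsc : ContDiff ℝ (⊤ : ℕ∞) (pFs G) := (hF.fderiv_right (by simp)).clm_apply contDiff_const
  have hAc : ContDiff ℝ (⊤ : ℕ∞) (pA G) := hInv.mul hFtc
  have hBc : ContDiff ℝ (⊤ : ℕ∞) (pB G) := hInv.mul hFsc
  -- the entries of the derivative matrices in the statement
  have hMt : ∀ t s : ℝ,
      (Matrix.of fun i j => deriv (fun τ => G τ s i j) t) = pFt G (t, s) := by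
    intro t s
    ext i j
    have h : HasDerivAt (fun τ => G τ s i j) (entryCLM i j (pFt G (t, s))) t :=
      (entryCLM i j).hasFDerivAt.comp_hasDerivAt t (lineT (pF G) hdF t s)
    rw [Matrix.of_apply]
    rw [h.deriv]
    rfl
  have hMs : ∀ t s : ℝ,
      (Matrix.of fun i j => deriv (fun σ => G t σ i j) s) = pFs G (t, s) := by
    intro t s
    ext i j
    have h : HasDerivAt (fun σ => G t σ i j) (entryCLM i j (pFs G (t, s))) s :=
      (entryCLM i j).hasFDerivAt.comp_hasDerivAt s (lineS (pF G) hdF t s)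
    rw [Matrix.of_apply]
    rw [h.deriv]
    rfl
  -- covariant derivatives of the constant section
  have hCt : ∀ t s : ℝ, covDt G (fun _ _ => v) t s = (1 / 2 : ℝ) • (pA G (t, s) *ᵥ v) := by
    intro t s
    simp only [covDt, deriv_const]
    rw [show (fun _ : Fin 2 => (0 : ℝ)) = 0 from rfl, zero_add, hMt t s]
    rfl
  have hCs : ∀ t s : ℝ, covDs G (fun _ _ => v) t s = (1 / 2 : ℝ) • (pB G (t, s) *ᵥ v) := by
    intro t s
    simp only [covDs, deriv_const]
    rw [show (fun _ : Fin 2 => (0 : ℝ)) = 0 from rfl, zero_add, hMs t s]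
    rfl
  -- derivative of the inverse along the coordinate lines
  have hInvT : ∀ t s : ℝ, HasDerivAt (fun τ => (pF G (τ, s))⁻¹)
      (-((pF G (t, s))⁻¹ * pFt G (t, s) * (pF G (t, s))⁻¹)) t := by
    intro t s
    have hx : HasFDerivAt Ring.inverse
        (-((ContinuousLinearMap.mulLeftRight ℝ _) ↑(hu (t, s)).unit⁻¹) ↑(hu (t, s)).unit⁻¹)
        (pF G (t, s)) := by
      have := hasFDerivAt_ringInverse (𝕜 := ℝ) (hu (t, s)).unit
      rwa [IsUnit.unit_spec] at this
    have h2 := hx.comp_hasDerivAt t (lineT (pF G) hdF t s)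
    have h3 : (↑(hu (t, s)).unit⁻¹ : Matrix (Fin 2) (Fin 2) ℝ) = (pF G (t, s))⁻¹ := by
      rw [Matrix.coe_units_inv, IsUnit.unit_spec]
    rw [h3] at h2
    simp only [ContinuousLinearMap.neg_apply, ContinuousLinearMap.mulLeftRight_apply] at h2
    exact h2.congr_of_eventuallyEq
      (Filter.Eventually.of_forall fun τ => Matrix.nonsing_inv_eq_ringInverse _)
  have hInvS : ∀ t s : ℝ, HasDerivAt (fun σ => (pF G (t, σ))⁻¹)
      (-((pF G (t, s))⁻¹ * pFs G (t, s) * (pF G (t, s))⁻¹)) s := by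
    intro t s
    have hx : HasFDerivAt Ring.inverse
        (-((ContinuousLinearMap.mulLeftRight ℝ _) ↑(hu (t, s)).unit⁻¹) ↑(hu (t, s)).unit⁻¹)
        (pF G (t, s)) := by
      have := hasFDerivAt_ringInverse (𝕜 := ℝ) (hu (t, s)).unit
      rwa [IsUnit.unit_spec] at this
    have h2 := hx.comp_hasDerivAt s (lineS (pF G) hdF t s)
    have h3 : (↑(hu (t, s)).unit⁻¹ : Matrix (Fin 2) (Fin 2) ℝ) = (pF G (t, s))⁻¹ := by
      rw [Matrix.coe_units_inv, IsUnit.unit_spec]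
    rw [h3] at h2
    simp only [ContinuousLinearMap.neg_apply, ContinuousLinearMap.mulLeftRight_apply] at h2
    exact h2.congr_of_eventuallyEq
      (Filter.Eventually.of_forall fun σ => Matrix.nonsing_inv_eq_ringInverse _)
  -- mixed second derivatives
  have hdF2 : Differentiable ℝ (fderiv ℝ (pF G)) := (hF.fderiv_right (m := (⊤ : ℕ∞)) (by simp)).differentiable (by simp)
  have hFtLineS : HasDerivAt (fun σ => pFt G (0, σ))
      (fderiv ℝ (fderiv ℝ (pF G)) (0, 0) (0, 1) (1, 0)) 0 :=
    (ContinuousLinearMap.apply ℝ (Matrix (Fin 2) (Fin 2) ℝ)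
        ((1 : ℝ), (0 : ℝ))).hasFDerivAt.comp_hasDerivAt 0 (lineS (fderiv ℝ (pF G)) hdF2 0 0)
  have hFsLineT : HasDerivAt (fun τ => pFs G (τ, 0))
      (fderiv ℝ (fderiv ℝ (pF G)) (0, 0) (1, 0) (0, 1)) 0 :=
    (ContinuousLinearMap.apply ℝ (Matrix (Fin 2) (Fin 2) ℝ)
        ((0 : ℝ), (1 : ℝ))).hasFDerivAt.comp_hasDerivAt 0 (lineT (fderiv ℝ (pF G)) hdF2 0 0)
  have hsymm : fderiv ℝ (fderiv ℝ (pF G)) (0, 0) (1, 0) (0, 1)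
      = fderiv ℝ (fderiv ℝ (pF G)) (0, 0) (0, 1) (1, 0) :=
    (hF.contDiffAt.isSymmSndFDerivAt (by rw [minSmoothness_of_isRCLikeNormedField]; exact WithTop.coe_le_coe.mpr (le_top : (2 : ℕ∞) ≤ ⊤))) _ _
  set S : Matrix (Fin 2) (Fin 2) ℝ := fderiv ℝ (fderiv ℝ (pF G)) (0, 0) (0, 1) (1, 0) with hS
  -- product rule for A along the s-line and B along the t-line
  have hALineS : HasDerivAt (fun σ => pA G (0, σ))
      (-(pB G (0, 0) * pA G (0, 0)) + (pF G (0, 0))⁻¹ * S) 0 := by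
    have h := (hInvS 0 0).mul hFtLineS
    have heq : -((pF G (0, 0))⁻¹ * pFs G (0, 0) * (pF G (0, 0))⁻¹) * pFt G (0, 0)
        + (pF G (0, 0))⁻¹ * S
        = -(pB G (0, 0) * pA G (0, 0)) + (pF G (0, 0))⁻¹ * S := by
      simp only [pA, pB, neg_mul, mul_assoc]
    rw [heq] at h
    exact h
  have hBLineT : HasDerivAt (fun τ => pB G (τ, 0))
      (-(pA G (0, 0) * pB G (0, 0)) + (pF G (0, 0))⁻¹ * S) 0 := by
    have h := (hInvT 0 0).mul hFsLineT
    have heq : -((pF G (0, 0))⁻¹ * pFt G (0, 0) * (pF G (0, 0))⁻¹) * pFs G (0, 0)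
        + (pF G (0, 0))⁻¹ * fderiv ℝ (fderiv ℝ (pF G)) (0, 0) (1, 0) (0, 1)
        = -(pA G (0, 0) * pB G (0, 0)) + (pF G (0, 0))⁻¹ * S := by
      rw [hsymm]
      simp only [pA, pB, neg_mul, mul_assoc]
    rw [heq] at h
    exact h
  -- component derivatives of the inner covariant derivatives
  have hD1 : ∀ i : Fin 2, deriv (fun σ => covDt G (fun _ _ => v) 0 σ i) 0
      = ((1 / 2 : ℝ) • ((-(pB G (0, 0) * pA G (0, 0)) + (pF G (0, 0))⁻¹ * S) *ᵥ v)) i := by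
    intro i
    have hfun : (fun σ => covDt G (fun _ _ => v) 0 σ i)
        = fun σ => (1 / 2 : ℝ) * vecCLM v i (pA G (0, σ)) := by
      funext σ
      rw [hCt 0 σ]
      rfl
    rw [hfun]
    have h2 : HasDerivAt (fun σ => (1 / 2 : ℝ) * vecCLM v i (pA G (0, σ)))
        ((1 / 2 : ℝ) * vecCLM v i (-(pB G (0, 0) * pA G (0, 0)) + (pF G (0, 0))⁻¹ * S)) 0 :=
      HasDerivAt.const_mul _ ((vecCLM v i).hasFDerivAt.comp_hasDerivAt 0 hALineS)
    rw [h2.deriv]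
    rfl
  have hD2 : ∀ i : Fin 2, deriv (fun τ => covDs G (fun _ _ => v) τ 0 i) 0
      = ((1 / 2 : ℝ) • ((-(pA G (0, 0) * pB G (0, 0)) + (pF G (0, 0))⁻¹ * S) *ᵥ v)) i := by
    intro i
    have hfun : (fun τ => covDs G (fun _ _ => v) τ 0 i)
        = fun τ => (1 / 2 : ℝ) * vecCLM v i (pB G (τ, 0)) := by
      funext τ
      rw [hCs τ 0]
      rfl
    rw [hfun]
    have h2 : HasDerivAt (fun τ => (1 / 2 : ℝ) * vecCLM v i (pB G (τ, 0)))
        ((1 / 2 : ℝ) * vecCLM v i (-(pA G (0, 0) * pB G (0, 0)) + (pF G (0, 0))⁻¹ * S)) 0 :=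
      HasDerivAt.const_mul _ ((vecCLM v i).hasFDerivAt.comp_hasDerivAt 0 hBLineT)
    rw [h2.deriv]
    rfl
  -- assemble the two iterated covariant derivatives
  have E1 : covDs G (covDt G fun _ _ => v) 0 0
      = (1 / 2 : ℝ) • ((-(pB G (0, 0) * pA G (0, 0)) + (pF G (0, 0))⁻¹ * S) *ᵥ v)
        + (1 / 4 : ℝ) • ((pB G (0, 0) * pA G (0, 0)) *ᵥ v) := by
    show (fun i => deriv (fun σ => covDt G (fun _ _ => v) 0 σ i) 0)
        + (1 / 2 : ℝ) • (((G 0 0)⁻¹ * Matrix.of fun i j => deriv (fun σ => G 0 σ i j) 0)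
            *ᵥ covDt G (fun _ _ => v) 0 0) = _
    rw [hMs 0 0, hCt 0 0]
    rw [show (G 0 0) = pF G (0, 0) from rfl]
    congr 1
    · funext i
      exact hD1 i
    · rw [Matrix.mulVec_smul, Matrix.mulVec_mulVec, smul_smul]
      congr 1
      norm_num
  have E2 : covDt G (covDs G fun _ _ => v) 0 0
      = (1 / 2 : ℝ) • ((-(pA G (0, 0) * pB G (0, 0)) + (pF G (0, 0))⁻¹ * S) *ᵥ v)
        + (1 / 4 : ℝ) • ((pA G (0, 0) * pB G (0, 0)) *ᵥ v) := by
    show (fun i => deriv (fun τ => covDs G (fun _ _ => v) τ 0 i) 0)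
        + (1 / 2 : ℝ) • (((G 0 0)⁻¹ * Matrix.of fun i j => deriv (fun τ => G τ 0 i j) 0)
            *ᵥ covDs G (fun _ _ => v) 0 0) = _
    rw [hMt 0 0, hCs 0 0]
    rw [show (G 0 0) = pF G (0, 0) from rfl]
    congr 1
    · funext i
      exact hD2 i
    · rw [Matrix.mulVec_smul, Matrix.mulVec_mulVec, smul_smul]
      congr 1
      norm_num
  -- final algebra
  rw [E1, E2, hMt 0 0, hMs 0 0, show (G 0 0) = pF G (0, 0) from rfl]
  simp only [pA, pB, Matrix.add_mulVec, Matrix.neg_mulVec, Matrix.sub_mulVec, smul_add, smul_neg,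
    smul_sub]
  module
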